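/- arXiv:nlin/0504062 — 2 statements merged into one kernel-verified Lean document; each statement's English description precedes it below -/
import Mathlib

section
/- If S¹, S² : ℂ → ℝⁿ → ℝ are smooth and satisfy the Hamiltonian ∂̄-system ∂̄S¹ = ∂W/∂S², ∂̄S² = −∂W/∂S¹ for a smooth Hamiltonian W(z, z̄, S¹, S²), then for any two parameter-variations δS, δ̃S (derivatives of a smooth family of solutions with respect to parameters) the bilinear form δS¹·δ̃S² − δ̃S¹·δS² is annihilated by ∂̄, i.e. ∂̄(δS¹ δ̃S² − δ̃S¹ δS²) = 0. -/
/-- The ∂̄ (d-bar) operator: ∂̄f = (∂_x f + i ∂_y f)/2 for f : ℂ → ℂ viewed as a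
real-smooth function of z = x + iy. -/
noncomputable def dbar (f : ℂ → ℂ) (z : ℂ) : ℂ :=
  (fderiv ℝ f z 1 + Complex.I * fderiv ℝ f z Complex.I) / 2

section Helpers

variable {E : Type*} [NormedAddCommGroup E] [NormedSpace ℝ E]
variable {E₁ : Type*} [NormedAddCommGroup E₁] [NormedSpace ℝ E₁]
variable {E₂ : Type*} [NormedAddCommGroup E₂] [NormedSpace ℝ E₂]

/-- Differentiability of the evaluated first derivative of a smooth map. -/
lemma fderiv_eval_diff (F : E → ℂ) (hF : ContDiff ℝ (⊤ : ℕ∞) F) (q : E) :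
    Differentiable ℝ (fun x => fderiv ℝ F x q) :=
  (ContinuousLinearMap.apply ℝ ℂ q).differentiable.comp
    ((hF.fderiv_right (m := 1) (WithTop.coe_le_coe.mpr (le_top : ((1 + 1 : ℕ) : ℕ∞) ≤ ⊤))).differentiable one_ne_zero)

/-- Derivative of the evaluated first derivative equals the second derivative. -/
lemma fderiv_eval (F : E → ℂ) (hF : ContDiff ℝ (⊤ : ℕ∞) F) (p₀ q d : E) :
    fderiv ℝ (fun x => fderiv ℝ F x q) p₀ d = fderiv ℝ (fderiv ℝ F) p₀ d q := by
  have h1 : DifferentiableAt ℝ (fderiv ℝ F) p₀ :=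
    ((hF.fderiv_right (m := 1) (WithTop.coe_le_coe.mpr (le_top : ((1 + 1 : ℕ) : ℕ∞) ≤ ⊤))).differentiable one_ne_zero).differentiableAt
  have h2 := ((ContinuousLinearMap.apply ℝ ℂ q).hasFDerivAt.comp p₀ h1.hasFDerivAt).fderiv
  rw [show (fun x => fderiv ℝ F x q)
      = ⇑((ContinuousLinearMap.apply ℝ ℂ) q) ∘ fderiv ℝ F from rfl, h2]
  rfl

/-- Partial derivative in the first variable. -/
lemma partial_fst (F : E₁ × E₂ → ℂ) (x : E₁) (y : E₂)
    (hF : DifferentiableAt ℝ F (x, y)) (u : E₁) :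
    fderiv ℝ (fun w => F (w, y)) x u = fderiv ℝ F (x, y) (u, 0) := by
  have h0 : HasFDerivAt (fun w : E₁ => (w, y))
      ((ContinuousLinearMap.id ℝ E₁).prod 0) x :=
    HasFDerivAt.prodMk (hasFDerivAt_id x) (hasFDerivAt_const y x)
  have := (hF.hasFDerivAt.comp x h0).fderiv
  rw [show (fun w => F (w, y)) = F ∘ (fun w : E₁ => (w, y)) from rfl, this]
  rfl

/-- Partial derivative in the second variable. -/
lemma partial_snd (F : E₁ × E₂ → ℂ) (x : E₁) (y : E₂)
    (hF : DifferentiableAt ℝ F (x, y)) (v : E₂) :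
    fderiv ℝ (fun w => F (x, w)) y v = fderiv ℝ F (x, y) (0, v) := by
  have h0 : HasFDerivAt (fun w : E₂ => (x, w))
      ((0 : E₂ →L[ℝ] E₁).prod (ContinuousLinearMap.id ℝ E₂)) y :=
    HasFDerivAt.prodMk (hasFDerivAt_const x y) (hasFDerivAt_id y)
  have := (hF.hasFDerivAt.comp y h0).fderiv
  rw [show (fun w => F (x, w)) = F ∘ (fun w : E₂ => (x, w)) from rfl, this]
  rfl

/-- Mixed partials commute for a jointly smooth family. -/
lemma mixed (S : ℂ → E → ℂ) (hS : ContDiff ℝ (⊤ : ℕ∞) fun p : ℂ × E => S p.1 p.2)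
    (z : ℂ) (t : E) (u : ℂ) (v : E) :
    fderiv ℝ (fun w => fderiv ℝ (S w) t v) z u
      = fderiv ℝ (fun t' => fderiv ℝ (fun w => S w t') z u) t v := by
  set F : ℂ × E → ℂ := fun p => S p.1 p.2 with hFdef
  have hFd : Differentiable ℝ F := hS.differentiable (by simp)
  have l1 : fderiv ℝ (fun w => fderiv ℝ (S w) t v) z u
      = fderiv ℝ (fderiv ℝ F) (z, t) (u, 0) (0, v) := by
    have e1 : (fun w => fderiv ℝ (S w) t v) = fun w => fderiv ℝ F (w, t) (0, v) :=
      funext fun w => partial_snd F w t (hFd _) v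
    rw [e1,
      partial_fst (fun x => fderiv ℝ F x (0, v)) z t
        ((fderiv_eval_diff F hS (0, v)) _) u]
    exact fderiv_eval F hS (z, t) (0, v) (u, 0)
  have l2 : fderiv ℝ (fun t' => fderiv ℝ (fun w => S w t') z u) t v
      = fderiv ℝ (fderiv ℝ F) (z, t) (0, v) (u, 0) := by
    have e2 : (fun t' => fderiv ℝ (fun w => S w t') z u)
        = fun t' => fderiv ℝ F (z, t') (u, 0) :=
      funext fun t' => partial_fst F z t' (hFd _) u
    rw [e2,
      partial_snd (fun x => fderiv ℝ F x (u, 0)) z t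
        ((fderiv_eval_diff F hS (u, 0)) _) v]
    exact fderiv_eval F hS (z, t) (u, 0) (0, v)
  rw [l1, l2]
  exact (hS.contDiffAt.isSymmSndFDerivAt (by rw [minSmoothness_of_isRCLikeNormedField]; exact WithTop.coe_le_coe.mpr (le_top : (2 : ℕ∞) ≤ ⊤))) _ _

/-- Differentiability in z of the parameter-variation. -/
lemma var_diff (S : ℂ → E → ℂ) (hS : ContDiff ℝ (⊤ : ℕ∞) fun p : ℂ × E => S p.1 p.2)
    (t : E) (v : E) :
    Differentiable ℝ (fun w => fderiv ℝ (S w) t v) := by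
  set F : ℂ × E → ℂ := fun p => S p.1 p.2 with hFdef
  have hFd : Differentiable ℝ F := hS.differentiable (by simp)
  have e1 : (fun w => fderiv ℝ (S w) t v) = fun w => fderiv ℝ F (w, t) (0, v) :=
    funext fun w => partial_snd F w t (hFd _) v
  rw [e1]
  exact fun w => ((fderiv_eval_diff F hS (0, v)) (w, t)).comp
    (g := fun x => fderiv ℝ F x (0, v)) w
    ((differentiable_id.prodMk (differentiable_const t)) w)

/-- Differentiability in t of the z-partial. -/
lemma zpartial_diff (S : ℂ → E → ℂ) (hS : ContDiff ℝ (⊤ : ℕ∞) fun p : ℂ × E => S p.1 p.2)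
    (z : ℂ) (u : ℂ) :
    Differentiable ℝ (fun t' => fderiv ℝ (fun w => S w t') z u) := by
  set F : ℂ × E → ℂ := fun p => S p.1 p.2 with hFdef
  have hFd : Differentiable ℝ F := hS.differentiable (by simp)
  have e1 : (fun t' => fderiv ℝ (fun w => S w t') z u)
      = fun t' => fderiv ℝ F (z, t') (u, 0) :=
    funext fun t' => partial_fst F z t' (hFd _) u
  rw [e1]
  exact fun t' => ((fderiv_eval_diff F hS (u, 0)) (z, t')).comp t'
    (((differentiable_const z).prodMk differentiable_id) t')

/-- fderiv of the `(A + I·B)/2` combination. -/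
lemma fderiv_half_comb (A B : E → ℂ) (t : E) (v : E)
    (hA : DifferentiableAt ℝ A t) (hB : DifferentiableAt ℝ B t) :
    fderiv ℝ (fun t' => (A t' + Complex.I * B t') / 2) t v
      = (fderiv ℝ A t v + Complex.I * fderiv ℝ B t v) / 2 := by
  have e : (fun t' => (A t' + Complex.I * B t') / 2)
      = fun t' => (2 : ℂ)⁻¹ * (A t' + Complex.I * B t') := by
    funext t'; rw [div_eq_inv_mul]
  rw [e, fderiv_const_mul (a := fun t' => A t' + Complex.I * B t') (hA.add (hB.const_mul Complex.I)) ((2 : ℂ)⁻¹)]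
  simp only [ContinuousLinearMap.coe_smul', Pi.smul_apply, smul_eq_mul]
  rw [fderiv_fun_add hA (hB.const_mul Complex.I), fderiv_const_mul hB Complex.I]
  simp only [ContinuousLinearMap.add_apply, ContinuousLinearMap.coe_smul',
    Pi.smul_apply, smul_eq_mul]
  ring

/-- ∂̄ commutes with parameter derivatives. -/
lemma dbar_comm (S : ℂ → E → ℂ) (hS : ContDiff ℝ (⊤ : ℕ∞) fun p : ℂ × E => S p.1 p.2)
    (z : ℂ) (t : E) (v : E) :
    dbar (fun w => fderiv ℝ (S w) t v) z
      = fderiv ℝ (fun t' => dbar (fun w => S w t') z) t v := by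
  unfold dbar
  rw [fderiv_half_comb _ _ t v ((zpartial_diff S hS z 1) t)
    ((zpartial_diff S hS z Complex.I) t)]
  rw [mixed S hS z t 1 v, mixed S hS z t Complex.I v]

/-- Product rule for ∂̄. -/
lemma dbar_mul (f g : ℂ → ℂ) (z : ℂ)
    (hf : DifferentiableAt ℝ f z) (hg : DifferentiableAt ℝ g z) :
    dbar (fun w => f w * g w) z = dbar f z * g z + f z * dbar g z := by
  unfold dbar
  rw [fderiv_fun_mul hf hg]
  simp only [ContinuousLinearMap.add_apply, ContinuousLinearMap.coe_smul',
    Pi.smul_apply, smul_eq_mul]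
  ring

/-- ∂̄ of a difference. -/
lemma dbar_sub (f g : ℂ → ℂ) (z : ℂ)
    (hf : DifferentiableAt ℝ f z) (hg : DifferentiableAt ℝ g z) :
    dbar (fun w => f w - g w) z = dbar f z - dbar g z := by
  unfold dbar
  rw [fderiv_fun_sub hf hg]
  simp only [ContinuousLinearMap.sub_apply]
  ring

/-- Chain rule for the evaluated derivative along a curve. -/
lemma chain_eval (g : ℂ × ℂ → ℂ) (hg : ContDiff ℝ (⊤ : ℕ∞) g) (c : E → ℂ × ℂ)
    (t : E) (v : E) (hc : DifferentiableAt ℝ c t) (q : ℂ × ℂ) :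
    fderiv ℝ (fun t' => fderiv ℝ g (c t') q) t v
      = fderiv ℝ (fderiv ℝ g) (c t) (fderiv ℝ c t v) q := by
  have hG : DifferentiableAt ℝ (fun x => fderiv ℝ g x q) (c t) :=
    (fderiv_eval_diff g hg q) _
  have := fderiv_comp t hG hc
  rw [show (fun t' => fderiv ℝ g (c t') q)
      = (fun x => fderiv ℝ g x q) ∘ c from rfl, this]
  exact fderiv_eval g hg (c t) q (fderiv ℝ c t v)

/-- ℂ-homogeneity of the second real derivative of a ℂ-differentiable map,
in the inner argument. -/
lemma Bsmul (g : ℂ × ℂ → ℂ) (hg : ContDiff ℝ (⊤ : ℕ∞) g) (hghol : Differentiable ℂ g)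
    (p d q : ℂ × ℂ) (s : ℂ) :
    fderiv ℝ (fderiv ℝ g) p d (s • q) = s * fderiv ℝ (fderiv ℝ g) p d q := by
  rw [← fderiv_eval g hg p (s • q) d, ← fderiv_eval g hg p q d]
  have e : (fun x => fderiv ℝ g x (s • q)) = fun x => s * fderiv ℝ g x q := by
    funext x
    have h := ((hghol x).hasFDerivAt.restrictScalars ℝ).fderiv
    rw [h]
    show fderiv ℂ g x (s • q) = s * fderiv ℂ g x q
    rw [(fderiv ℂ g x).map_smul s q, smul_eq_mul]
  rw [e, fderiv_const_mul ((fderiv_eval_diff g hg q) p) s]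
  simp only [ContinuousLinearMap.coe_smul', Pi.smul_apply, smul_eq_mul]

end Helpers

/-- If S¹, S² (depending on z ∈ ℂ and parameters t ∈ ℝⁿ) solve the
Hamiltonian ∂̄-system ∂̄S¹ = ∂W/∂S², ∂̄S² = −∂W/∂S¹ for a smooth Hamiltonian
W(z, z̄; S¹, S²), then for any two parameter variations δS = ∂S/∂λ (directions v, v'),
the form δS¹·δ̃S² − δ̃S¹·δS² is annihilated by ∂̄. -/
theorem stmt0 {n : ℕ}
    (W : ℂ → ℂ → ℂ → ℂ)
    (hW : ContDiff ℝ (⊤ : ℕ∞) fun p : ℂ × ℂ × ℂ => W p.1 p.2.1 p.2.2)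
    (hWhol : ∀ z : ℂ, Differentiable ℂ fun q : ℂ × ℂ => W z q.1 q.2)
    (S1 S2 : ℂ → (Fin n → ℝ) → ℂ)
    (hS1 : ContDiff ℝ (⊤ : ℕ∞) fun p : ℂ × (Fin n → ℝ) => S1 p.1 p.2)
    (hS2 : ContDiff ℝ (⊤ : ℕ∞) fun p : ℂ × (Fin n → ℝ) => S2 p.1 p.2)
    (ham1 : ∀ z t, dbar (fun w => S1 w t) z
      = deriv (fun s => W z (S1 z t) s) (S2 z t))
    (ham2 : ∀ z t, dbar (fun w => S2 w t) z
      = - deriv (fun s => W z s (S2 z t)) (S1 z t))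
    (v v' : Fin n → ℝ) :
    ∀ z t, dbar (fun w =>
        fderiv ℝ (S1 w) t v * fderiv ℝ (S2 w) t v'
      - fderiv ℝ (S1 w) t v' * fderiv ℝ (S2 w) t v) z = 0 := by
  intro z t
  -- the Hamiltonian at this value of z
  set g : ℂ × ℂ → ℂ := fun q => W z q.1 q.2 with hgdef
  have hg : ContDiff ℝ (⊤ : ℕ∞) g :=
    hW.comp (contDiff_const.prodMk contDiff_id)
  have hghol : Differentiable ℂ g := hWhol z
  -- the curve in phase space
  set c : (Fin n → ℝ) → ℂ × ℂ := fun t' => (S1 z t', S2 z t') with hcdef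
  have hS1d : Differentiable ℝ (fun p : ℂ × (Fin n → ℝ) => S1 p.1 p.2) :=
    hS1.differentiable (by simp)
  have hS2d : Differentiable ℝ (fun p : ℂ × (Fin n → ℝ) => S2 p.1 p.2) :=
    hS2.differentiable (by simp)
  have hS1z : Differentiable ℝ (S1 z) := fun t' =>
    (hS1d (z, t')).comp t' (((differentiable_const z).prodMk differentiable_id) t')
  have hS2z : Differentiable ℝ (S2 z) := fun t' =>
    (hS2d (z, t')).comp t' (((differentiable_const z).prodMk differentiable_id) t')
  have hc : Differentiable ℝ c := fun t' => ((hS1z t').prodMk (hS2z t'))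
  -- the Hamilton equations in fderiv form
  have fz : ∀ q : ℂ × ℂ, fderiv ℝ g q = (fderiv ℂ g q).restrictScalars ℝ :=
    fun q => ((hghol q).hasFDerivAt.restrictScalars ℝ).fderiv
  have ham1' : ∀ t', dbar (fun w => S1 w t') z = fderiv ℝ g (c t') ((0 : ℂ), (1 : ℂ)) := by
    intro t'
    rw [ham1 z t']
    have h0 : HasFDerivAt (fun s : ℂ => ((S1 z t', s) : ℂ × ℂ))
        ((0 : ℂ →L[ℂ] ℂ).prod (ContinuousLinearMap.id ℂ ℂ)) (S2 z t') :=
      HasFDerivAt.prodMk (hasFDerivAt_const _ _) (hasFDerivAt_id _)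
    have hd : HasFDerivAt (fun s : ℂ => g (S1 z t', s))
        ((fderiv ℂ g (c t')).comp ((0 : ℂ →L[ℂ] ℂ).prod (ContinuousLinearMap.id ℂ ℂ)))
        (S2 z t') := (hghol (c t')).hasFDerivAt.comp (S2 z t') h0
    have := hd.hasDerivAt.deriv
    rw [show (fun s : ℂ => W z (S1 z t') s) = fun s : ℂ => g (S1 z t', s) from rfl, this,
      fz (c t')]
    rfl
  have ham2' : ∀ t', dbar (fun w => S2 w t') z
      = - fderiv ℝ g (c t') ((1 : ℂ), (0 : ℂ)) := by
    intro t'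
    rw [ham2 z t']
    have h0 : HasFDerivAt (fun s : ℂ => ((s, S2 z t') : ℂ × ℂ))
        ((ContinuousLinearMap.id ℂ ℂ).prod (0 : ℂ →L[ℂ] ℂ)) (S1 z t') :=
      HasFDerivAt.prodMk (hasFDerivAt_id _) (hasFDerivAt_const _ _)
    have hd : HasFDerivAt (fun s : ℂ => g (s, S2 z t'))
        ((fderiv ℂ g (c t')).comp ((ContinuousLinearMap.id ℂ ℂ).prod (0 : ℂ →L[ℂ] ℂ)))
        (S1 z t') := by
        have := (hghol (c t')).hasFDerivAt.comp (S1 z t') h0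
        exact this
    have := hd.hasDerivAt.deriv
    rw [show (fun s : ℂ => W z s (S2 z t')) = fun s : ℂ => g (s, S2 z t') from rfl, this,
      fz (c t')]
    rfl
  -- notation for the variations at (z, t)
  set a : ℂ := fderiv ℝ (S1 z) t v with ha
  set b : ℂ := fderiv ℝ (S2 z) t v with hb
  set a' : ℂ := fderiv ℝ (S1 z) t v' with ha'
  set b' : ℂ := fderiv ℝ (S2 z) t v' with hb'
  have hcder : ∀ u, fderiv ℝ c t u = (fderiv ℝ (S1 z) t u, fderiv ℝ (S2 z) t u) := by
    intro u
    rw [hcdef]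
    rw [DifferentiableAt.fderiv_prodMk (hS1z t) (hS2z t)]
    rfl
  -- second derivative of the Hamiltonian
  set B := fderiv ℝ (fderiv ℝ g) (c t) with hB
  have hsymm : IsSymmSndFDerivAt ℝ g (c t) := hg.contDiffAt.isSymmSndFDerivAt (by rw [minSmoothness_of_isRCLikeNormedField]; exact WithTop.coe_le_coe.mpr (le_top : (2 : ℕ∞) ≤ ⊤))
  -- linearized equations
  have dA : ∀ u : Fin n → ℝ, dbar (fun w => fderiv ℝ (S1 w) t u) z
      = B (fderiv ℝ (S1 z) t u, fderiv ℝ (S2 z) t u) ((0 : ℂ), (1 : ℂ)) := by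
    intro u
    rw [dbar_comm S1 hS1 z t u]
    have e : (fun t' => dbar (fun w => S1 w t') z)
        = fun t' => fderiv ℝ g (c t') ((0 : ℂ), (1 : ℂ)) := funext fun t' => ham1' t'
    rw [e, chain_eval g hg c t u (hc t) _, hcder u]
  have dB : ∀ u : Fin n → ℝ, dbar (fun w => fderiv ℝ (S2 w) t u) z
      = - B (fderiv ℝ (S1 z) t u, fderiv ℝ (S2 z) t u) ((1 : ℂ), (0 : ℂ)) := by
    intro u
    rw [dbar_comm S2 hS2 z t u]
    have e : (fun t' => dbar (fun w => S2 w t') z)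
        = fun t' => - fderiv ℝ g (c t') ((1 : ℂ), (0 : ℂ)) := funext fun t' => ham2' t'
    rw [e]
    have hdiff : DifferentiableAt ℝ (fun t' => fderiv ℝ g (c t') ((1 : ℂ), (0 : ℂ))) t :=
      ((fderiv_eval_diff g hg _) (c t)).comp t (hc t)
    rw [fderiv_fun_neg]
    show -(fderiv ℝ (fun t' => fderiv ℝ g (c t') ((1 : ℂ), (0 : ℂ))) t u) = _
    rw [chain_eval g hg c t u (hc t) _, hcder u]
  -- expansion of B via symmetry and ℂ-linearity
  have expand : ∀ (x y : ℂ) (e : ℂ × ℂ), B (x, y) e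
      = x * B e ((1 : ℂ), (0 : ℂ)) + y * B e ((0 : ℂ), (1 : ℂ)) := by
    intro x y e
    rw [hB, hsymm (x, y) e]
    have hxy : ((x, y) : ℂ × ℂ)
        = x • (((1 : ℂ), (0 : ℂ)) : ℂ × ℂ) + y • (((0 : ℂ), (1 : ℂ)) : ℂ × ℂ) := by
      simp [Prod.ext_iff]
    rw [hxy, (fderiv ℝ (fderiv ℝ g) (c t) e).map_add,
      Bsmul g hg hghol (c t) e _ x, Bsmul g hg hghol (c t) e _ y,
      hsymm e ((1 : ℂ), (0 : ℂ)), hsymm e ((0 : ℂ), (1 : ℂ))]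
  -- differentiability of the variations in z
  have d1v := (var_diff S1 hS1 t v) z
  have d1v' := (var_diff S1 hS1 t v') z
  have d2v := (var_diff S2 hS2 t v) z
  have d2v' := (var_diff S2 hS2 t v') z
  -- expand the ∂̄ of the symplectic form
  rw [dbar_sub _ _ z (d1v.fun_mul d2v') (d1v'.fun_mul d2v),
    dbar_mul _ _ z d1v d2v', dbar_mul _ _ z d1v' d2v,
    dA v, dA v', dB v, dB v']
  rw [expand a b ((0 : ℂ), (1 : ℂ)), expand a' b' ((0 : ℂ), (1 : ℂ)),
    expand a b ((1 : ℂ), (0 : ℂ)), expand a' b' ((1 : ℂ), (0 : ℂ))]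
  have hsym12 : B ((0 : ℂ), (1 : ℂ)) ((1 : ℂ), (0 : ℂ))
      = B ((1 : ℂ), (0 : ℂ)) ((0 : ℂ), (1 : ℂ)) := hsymm _ _
  rw [hsym12]
  ring
end

section
/- Let S¹, S² : ℝ⁴ → ℝ be smooth functions of (x,y,t,t̃) (for fixed spectral parameter z ∈ ℝ) satisfying the linear problems Sⁱ_t − z Sⁱ_x = {Sⁱ, Θ_x} and Sⁱ_{t̃} − z Sⁱ_y = {Sⁱ, Θ_y} for a smooth Θ, where {F,H} = F_x H_y − F_y H_x (derivatives in x,y). If moreover Θ satisfies the second heavenly equation Θ_{ty} − Θ_{t̃x} − Θ_{xy}² + Θ_{xx}Θ_{yy} = 0, then any smooth function F(S¹,S²) of the two solutions satisfies the linearized heavenly equation: (δΘ)_{ty} − (δΘ)_{t̃x} + {Θ_x, (δΘ)_y} − {Θ_y, (δΘ)_x} = 0 with δΘ := F(S¹,S²). -/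
/-- Partial derivative on ℝ⁴ (0 = x, 1 = y, 2 = t, 3 = t̃). -/
noncomputable def pd (i : Fin 4) (f : (Fin 4 → ℝ) → ℝ) : (Fin 4 → ℝ) → ℝ :=
  fun x => fderiv ℝ f x (Pi.single i 1)

/-- Canonical Poisson bracket in (x,y): {A,B} = A_x B_y − A_y B_x. -/
noncomputable def pb (f g : (Fin 4 → ℝ) → ℝ) : (Fin 4 → ℝ) → ℝ :=
  fun x => pd 0 f x * pd 1 g x - pd 1 f x * pd 0 g x

/-- The second heavenly expression H(Θ) = Θ_ty − Θ_t̃x − Θ_xy² + Θ_xx Θ_yy. -/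
noncomputable def heav (Θ : (Fin 4 → ℝ) → ℝ) : (Fin 4 → ℝ) → ℝ :=
  fun x => pd 2 (pd 1 Θ) x - pd 3 (pd 0 Θ) x - (pd 1 (pd 0 Θ) x) ^ 2
    + pd 0 (pd 0 Θ) x * pd 1 (pd 1 Θ) x

lemma pd_contDiff {f : (Fin 4 → ℝ) → ℝ} (hf : ContDiff ℝ (⊤ : ℕ∞) f) (i : Fin 4) :
    ContDiff ℝ (⊤ : ℕ∞) (pd i f) :=
  (hf.fderiv_right (by simp)).clm_apply contDiff_const

lemma pd_comm {f : (Fin 4 → ℝ) → ℝ} (hf : ContDiff ℝ (⊤ : ℕ∞) f) (i j : Fin 4) :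
    pd i (pd j f) = pd j (pd i f) := by
  funext x
  have hdf : Differentiable ℝ f := hf.differentiable (by simp)
  have hdf' : ContDiff ℝ (⊤ : ℕ∞) (fderiv ℝ f) := hf.fderiv_right (by simp)
  have hd : DifferentiableAt ℝ (fderiv ℝ f) x := (hdf'.differentiable (by simp)) x
  have key : ∀ u v : Fin 4 → ℝ,
      fderiv ℝ (fun y => fderiv ℝ f y v) x u = fderiv ℝ (fderiv ℝ f) x u v := by
    intro u v
    have := fderiv_clm_apply (c := fderiv ℝ f) (u := fun _ => v) hd
      (differentiableAt_const v)
    rw [show (fun y => fderiv ℝ f y v) = (fun y => (fderiv ℝ f y) ((fun _ => v) y)) from rfl,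
      this]
    simp
  have symm := second_derivative_symmetric (f := f) (f' := fderiv ℝ f)
    (f'' := fderiv ℝ (fderiv ℝ f) x) (fun y => (hdf y).hasFDerivAt) hd.hasFDerivAt
  show fderiv ℝ (fun y => fderiv ℝ f y (Pi.single j 1)) x (Pi.single i 1)
      = fderiv ℝ (fun y => fderiv ℝ f y (Pi.single i 1)) x (Pi.single j 1)
  rw [key, key]
  exact symm _ _

lemma pd_comb {c : ℝ} {u v w p q : (Fin 4 → ℝ) → ℝ} (i : Fin 4)
    (hu : ContDiff ℝ (⊤ : ℕ∞) u) (hv : ContDiff ℝ (⊤ : ℕ∞) v) (hw : ContDiff ℝ (⊤ : ℕ∞) w)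
    (hp : ContDiff ℝ (⊤ : ℕ∞) p) (hq : ContDiff ℝ (⊤ : ℕ∞) q) :
    pd i (fun x => c * u x + (v x * w x - p x * q x)) = fun x =>
      c * pd i u x + (pd i v x * w x + v x * pd i w x
        - (pd i p x * q x + p x * pd i q x)) := by
  funext x
  have du : DifferentiableAt ℝ u x := (hu.differentiable (by simp)) x
  have dv : DifferentiableAt ℝ v x := (hv.differentiable (by simp)) x
  have dw : DifferentiableAt ℝ w x := (hw.differentiable (by simp)) x
  have dp : DifferentiableAt ℝ p x := (hp.differentiable (by simp)) x
  have dq : DifferentiableAt ℝ q x := (hq.differentiable (by simp)) x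
  show fderiv ℝ (fun x => c * u x + (v x * w x - p x * q x)) x (Pi.single i 1) = _
  rw [fderiv_fun_add (f := fun y => c * u y) (g := fun y => v y * w y - p y * q y) ((differentiableAt_const c).mul du) ((dv.mul dw).sub (dp.mul dq)),
    fderiv_const_mul du, fderiv_fun_sub (f := fun y => v y * w y) (g := fun y => p y * q y) (dv.mul dw) (dp.mul dq),
    fderiv_fun_mul dv dw, fderiv_fun_mul dp dq]
  simp [pd]
  ring

lemma pd_chain {S1 S2 : (Fin 4 → ℝ) → ℝ} (hS1 : ContDiff ℝ (⊤ : ℕ∞) S1) (hS2 : ContDiff ℝ (⊤ : ℕ∞) S2)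
    {F : ℝ → ℝ → ℝ} (hF : ContDiff ℝ (⊤ : ℕ∞) fun q : ℝ × ℝ => F q.1 q.2) (i : Fin 4)
    (x : Fin 4 → ℝ) :
    pd i (fun y => F (S1 y) (S2 y)) x
      = fderiv ℝ (fun q : ℝ × ℝ => F q.1 q.2) (S1 x, S2 x) (1, 0) * pd i S1 x
        + fderiv ℝ (fun q : ℝ × ℝ => F q.1 q.2) (S1 x, S2 x) (0, 1) * pd i S2 x := by
  have ds : DifferentiableAt ℝ (fun y => (S1 y, S2 y)) x :=
    ((hS1.differentiable (by simp)) x).prodMk ((hS2.differentiable (by simp)) x)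
  have dF : DifferentiableAt ℝ (fun q : ℝ × ℝ => F q.1 q.2) (S1 x, S2 x) :=
    (hF.differentiable (by simp)) _
  have hcomp : (fun y => F (S1 y) (S2 y))
      = (fun q : ℝ × ℝ => F q.1 q.2) ∘ (fun y => (S1 y, S2 y)) := rfl
  show fderiv ℝ (fun y => F (S1 y) (S2 y)) x (Pi.single i 1) = _
  rw [hcomp, fderiv_comp x dF ds]
  have hs : fderiv ℝ (fun y => (S1 y, S2 y)) x
      = (fderiv ℝ S1 x).prod (fderiv ℝ S2 x) :=
    (((hS1.differentiable (by simp)) x).hasFDerivAt.prodMk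
      ((hS2.differentiable (by simp)) x).hasFDerivAt).fderiv
  rw [ContinuousLinearMap.comp_apply, hs]
  have : ((fderiv ℝ S1 x).prod (fderiv ℝ S2 x)) (Pi.single i 1)
      = (pd i S1 x) • ((1:ℝ), (0:ℝ)) + (pd i S2 x) • ((0:ℝ), (1:ℝ)) := by
    simp [pd, Prod.ext_iff]
  rw [this, map_add, map_smul, map_smul, smul_eq_mul, smul_eq_mul]
  ring

/-- if Θ solves the second heavenly equation and S¹, S² solve its Lax
pair (with real spectral parameter z), then δΘ := F(S¹,S²), for an arbitrary smooth F,
solves the linearized heavenly equation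
(δΘ)_ty − (δΘ)_t̃x + {Θ_x,(δΘ)_y} − {Θ_y,(δΘ)_x} = 0. -/
theorem stmt7 (Θ : (Fin 4 → ℝ) → ℝ) (hΘ : ContDiff ℝ (⊤ : ℕ∞) Θ)
    (hheav : ∀ x, heav Θ x = 0)
    (z : ℝ) (S1 S2 : (Fin 4 → ℝ) → ℝ)
    (hS1 : ContDiff ℝ (⊤ : ℕ∞) S1) (hS2 : ContDiff ℝ (⊤ : ℕ∞) S2)
    (h1t : ∀ x, pd 2 S1 x - z * pd 0 S1 x = pb S1 (pd 0 Θ) x)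
    (h1t' : ∀ x, pd 3 S1 x - z * pd 1 S1 x = pb S1 (pd 1 Θ) x)
    (h2t : ∀ x, pd 2 S2 x - z * pd 0 S2 x = pb S2 (pd 0 Θ) x)
    (h2t' : ∀ x, pd 3 S2 x - z * pd 1 S2 x = pb S2 (pd 1 Θ) x)
    (F : ℝ → ℝ → ℝ) (hF : ContDiff ℝ (⊤ : ℕ∞) fun q : ℝ × ℝ => F q.1 q.2) :
    ∀ x, pd 2 (pd 1 fun y => F (S1 y) (S2 y)) x
        - pd 3 (pd 0 fun y => F (S1 y) (S2 y)) x
        + pb (pd 0 Θ) (pd 1 fun y => F (S1 y) (S2 y)) x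
        - pb (pd 1 Θ) (pd 0 fun y => F (S1 y) (S2 y)) x = 0 := by
  set G : (Fin 4 → ℝ) → ℝ := fun y => F (S1 y) (S2 y) with hGdef
  have hG : ContDiff ℝ (⊤ : ℕ∞) G := hF.comp ((hS1.prodMk hS2))
  have chain := pd_chain hS1 hS2 hF
  -- Lax pair for G
  have hGt : ∀ x, pd 2 G x = z * pd 0 G x
      + (pd 0 G x * pd 1 (pd 0 Θ) x - pd 1 G x * pd 0 (pd 0 Θ) x) := by
    intro x
    have l1 := h1t x
    have l2 := h2t x
    simp only [pb] at l1 l2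
    rw [hGdef, chain 0 x, chain 1 x, chain 2 x]
    linear_combination (fderiv ℝ (fun q : ℝ × ℝ => F q.1 q.2) (S1 x, S2 x) (1, 0)) * l1
      + (fderiv ℝ (fun q : ℝ × ℝ => F q.1 q.2) (S1 x, S2 x) (0, 1)) * l2
  have hGt' : ∀ x, pd 3 G x = z * pd 1 G x
      + (pd 0 G x * pd 1 (pd 1 Θ) x - pd 1 G x * pd 0 (pd 1 Θ) x) := by
    intro x
    have l1 := h1t' x
    have l2 := h2t' x
    simp only [pb] at l1 l2
    rw [hGdef, chain 0 x, chain 1 x, chain 3 x]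
    linear_combination (fderiv ℝ (fun q : ℝ × ℝ => F q.1 q.2) (S1 x, S2 x) (1, 0)) * l1
      + (fderiv ℝ (fun q : ℝ × ℝ => F q.1 q.2) (S1 x, S2 x) (0, 1)) * l2
  have hG0 : ContDiff ℝ (⊤ : ℕ∞) (pd 0 G) := pd_contDiff hG 0
  have hG1 : ContDiff ℝ (⊤ : ℕ∞) (pd 1 G) := pd_contDiff hG 1
  have hΘ0 : ContDiff ℝ (⊤ : ℕ∞) (pd 0 Θ) := pd_contDiff hΘ 0
  have hΘ1 : ContDiff ℝ (⊤ : ℕ∞) (pd 1 Θ) := pd_contDiff hΘ 1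
  have hfun2 : pd 2 G = fun x => z * pd 0 G x
      + (pd 0 G x * pd 1 (pd 0 Θ) x - pd 1 G x * pd 0 (pd 0 Θ) x) := funext hGt
  have hfun3 : pd 3 G = fun x => z * pd 1 G x
      + (pd 0 G x * pd 1 (pd 1 Θ) x - pd 1 G x * pd 0 (pd 1 Θ) x) := funext hGt'
  have e2 : pd 1 (pd 2 G) = fun x =>
      z * pd 1 (pd 0 G) x + (pd 1 (pd 0 G) x * pd 1 (pd 0 Θ) x
        + pd 0 G x * pd 1 (pd 1 (pd 0 Θ)) x
        - (pd 1 (pd 1 G) x * pd 0 (pd 0 Θ) x + pd 1 G x * pd 1 (pd 0 (pd 0 Θ)) x)) := by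
    rw [hfun2]
    exact pd_comb 1 hG0 hG0 (pd_contDiff hΘ0 1) hG1 (pd_contDiff hΘ0 0)
  have e3 : pd 0 (pd 3 G) = fun x =>
      z * pd 0 (pd 1 G) x + (pd 0 (pd 0 G) x * pd 1 (pd 1 Θ) x
        + pd 0 G x * pd 0 (pd 1 (pd 1 Θ)) x
        - (pd 0 (pd 1 G) x * pd 0 (pd 1 Θ) x + pd 1 G x * pd 0 (pd 0 (pd 1 Θ)) x)) := by
    rw [hfun3]
    exact pd_comb 0 hG1 hG0 (pd_contDiff hΘ1 1) hG1 (pd_contDiff hΘ1 0)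
  have cG : pd 1 (pd 0 G) = pd 0 (pd 1 G) := pd_comm hG 1 0
  have cΘ : pd 1 (pd 0 Θ) = pd 0 (pd 1 Θ) := pd_comm hΘ 1 0
  have c3a : pd 1 (pd 1 (pd 0 Θ)) = pd 0 (pd 1 (pd 1 Θ)) := by
    rw [congrArg (pd 1) cΘ]
    exact pd_comm hΘ1 1 0
  have c3b : pd 1 (pd 0 (pd 0 Θ)) = pd 0 (pd 0 (pd 1 Θ)) := by
    rw [pd_comm hΘ0 1 0, congrArg (pd 0) cΘ]
  have c3c : pd 1 (pd 0 (pd 1 Θ)) = pd 0 (pd 1 (pd 1 Θ)) := pd_comm hΘ1 1 0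
  intro x
  have s2 : pd 2 (pd 1 G) x = pd 1 (pd 2 G) x := by rw [pd_comm hG 2 1]
  have s3 : pd 3 (pd 0 G) x = pd 0 (pd 3 G) x := by rw [pd_comm hG 3 0]
  rw [s2, s3, e2, e3]
  simp only [pb, cG, cΘ, c3a, c3b, c3c]
  ring
end
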